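/- arXiv:2410.08307 — 11 statements merged into one kernel-verified Lean document; each statement's English description precedes it below -/
import Mathlib

section
/- Let I be a finite nonempty type and Π a nonempty type (of policies). Let ρ : Π → (I → ℝ) assign to each π ∈ Π an occupancy measure ρ π, let ρUN : I → ℝ, let H : Π → ℝ, and let ψ : (I → ℝ) → ℝ. Define L π r = (∑ i, ρUN i * r i) − (∑ i, ρ π i * r i) − H π + ψ r and d π = ⨆ (r : I → ℝ), ((∑ i, (ρ π i − ρUN i) * r i) − ψ r). Assume that for every π ∈ Π the set { (∑ i, (ρ π i − ρUN i) * r i) − ψ r | r : I → ℝ } is bounded above, and that the set { d π + H π | π ∈ Π } is bounded above. Then ⨅ (π : Π), ⨅ (r : I → ℝ), L π r = −(⨆ (π : Π), (d π + H π)). -/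
private lemma neg_iSup_real {ι : Type*} (f : ι → ℝ) : (⨅ i, -f i) = -⨆ i, f i := by
  rw [iInf, Real.sInf_def, iSup]
  congr 2
  ext x
  simp [Set.mem_neg, eq_comm, neg_eq_iff_eq_neg]

/-- Proposition 1: minimizing `L(π, r)` over rewards and policies equals
maximizing over policies the statistical distance `d_ψ(ρ π, ρUN)` plus the
entropy term. -/
theorem stmt_1 {I : Type*} [Fintype I] [Nonempty I] {Pol : Type*} [Nonempty Pol]
    (ρ : Pol → I → ℝ) (ρUN : I → ℝ) (H : Pol → ℝ) (ψ : (I → ℝ) → ℝ)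
    (L : Pol → (I → ℝ) → ℝ)
    (hL : ∀ π r, L π r = (∑ i, ρUN i * r i) - (∑ i, ρ π i * r i) - H π + ψ r)
    (d : Pol → ℝ)
    (hd : ∀ π, d π = ⨆ r : I → ℝ, ((∑ i, (ρ π i - ρUN i) * r i) - ψ r))
    (hbdd1 : ∀ π : Pol, BddAbove
      (Set.range fun r : I → ℝ => (∑ i, (ρ π i - ρUN i) * r i) - ψ r))
    (hbdd2 : BddAbove (Set.range fun π : Pol => d π + H π)) :
    ⨅ π : Pol, ⨅ r : I → ℝ, L π r = -(⨆ π : Pol, (d π + H π)) := by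
  have key : ∀ π, (⨅ r : I → ℝ, L π r) = -(d π + H π) := by
    intro π
    have hLr : ∀ r : I → ℝ, L π r
        = -(((∑ i, (ρ π i - ρUN i) * r i) - ψ r) + H π) := by
      intro r
      rw [hL]
      rw [Finset.sum_congr rfl (fun i _ => sub_mul (ρ π i) (ρUN i) (r i)),
        Finset.sum_sub_distrib]
      ring
    calc (⨅ r : I → ℝ, L π r)
        = ⨅ r : I → ℝ, -(((∑ i, (ρ π i - ρUN i) * r i) - ψ r) + H π) := by
          exact iInf_congr hLr
      _ = -⨆ r : I → ℝ, (((∑ i, (ρ π i - ρUN i) * r i) - ψ r) + H π) :=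
          neg_iSup_real _
      _ = -(d π + H π) := by
          rw [hd π, ciSup_add (hbdd1 π)]
  calc (⨅ π : Pol, ⨅ r : I → ℝ, L π r)
      = ⨅ π : Pol, -(d π + H π) := iInf_congr key
    _ = -(⨆ π : Pol, (d π + H π)) := neg_iSup_real _
end

section
/- Let A be a finite nonempty type and Q : A → ℝ. Define F : (A → ℝ) → ℝ by F π = ∑ a, (π a * Q a + negMulLog (π a)). If π ∈ stdSimplex ℝ A and F π = log (∑ a, exp (Q a)), then π a = exp (Q a) / ∑ a', exp (Q a') for every a ∈ A; i.e., the softmax vector is the unique maximizer of F on the probability simplex. -/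
lemma aux_gibbs (t p : ℝ) (ht : 0 ≤ t) (hp : 0 < p) :
    Real.negMulLog t + t * Real.log p ≤ p - t ∧
      (Real.negMulLog t + t * Real.log p = p - t → t = p) := by
  rcases eq_or_lt_of_le ht with h | h
  · subst h
    simp only [Real.negMulLog_zero, zero_mul, add_zero, sub_zero]
    exact ⟨le_of_lt hp, fun h => h⟩
  · have hlog : Real.negMulLog t + t * Real.log p = t * Real.log (p / t) := by
      rw [Real.negMulLog, Real.log_div (ne_of_gt hp) (ne_of_gt h)]
      ring
    constructor
    · rw [hlog]
      have h1 : Real.log (p / t) ≤ p / t - 1 :=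
        Real.log_le_sub_one_of_pos (div_pos hp h)
      calc t * Real.log (p / t) ≤ t * (p / t - 1) := by
            exact mul_le_mul_of_nonneg_left h1 ht
        _ = p - t := by field_simp
    · intro heq
      by_contra hne
      have hne' : p / t ≠ 1 := by
        intro hcon
        exact hne ((div_eq_one_iff_eq (ne_of_gt h)).mp hcon).symm
      have h1 : Real.log (p / t) < p / t - 1 :=
        Real.log_lt_sub_one_of_pos (div_pos hp h) hne'
      have h2 : t * Real.log (p / t) < t * (p / t - 1) :=
        mul_lt_mul_of_pos_left h1 h
      rw [hlog] at heq
      have : t * (p / t - 1) = p - t := by field_simp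
      linarith

/-- Uniqueness in Proposition 2(i): the softmax vector is the unique maximizer
of the entropy-regularized objective `F` on the probability simplex. -/
theorem stmt_3 {A : Type*} [Fintype A] [Nonempty A] (Q : A → ℝ)
    (F : (A → ℝ) → ℝ)
    (hF : ∀ π, F π = ∑ a, (π a * Q a + Real.negMulLog (π a)))
    (π : A → ℝ) (hπ : π ∈ stdSimplex ℝ A)
    (hmax : F π = Real.log (∑ a, Real.exp (Q a))) :
    ∀ a, π a = Real.exp (Q a) / ∑ a', Real.exp (Q a') := by
  obtain ⟨hnn, hsum⟩ := hπ
  set Z : ℝ := ∑ a, Real.exp (Q a) with hZdef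
  have hZ : 0 < Z := Finset.sum_pos (fun a _ => Real.exp_pos (Q a)) ⟨Classical.arbitrary A, Finset.mem_univ _⟩
  set p : A → ℝ := fun a => Real.exp (Q a) / Z with hpdef
  have hp : ∀ a, 0 < p a := fun a => div_pos (Real.exp_pos _) hZ
  have hpsum : ∑ a, p a = 1 := by
    rw [← Finset.sum_div]
    exact div_self (ne_of_gt hZ)
  have hlogp : ∀ a, Real.log (p a) = Q a - Real.log Z := by
    intro a
    rw [hpdef]
    rw [Real.log_div (ne_of_gt (Real.exp_pos _)) (ne_of_gt hZ), Real.log_exp]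
  -- rewrite the objective
  have key : ∑ a, (Real.negMulLog (π a) + π a * Real.log (p a)) = 0 := by
    have : ∑ a, (π a * Q a + Real.negMulLog (π a)) =
        ∑ a, (Real.negMulLog (π a) + π a * Real.log (p a)) + (∑ a, π a) * Real.log Z := by
      rw [Finset.sum_mul, ← Finset.sum_add_distrib]
      apply Finset.sum_congr rfl
      intro a _
      rw [hlogp a]
      ring
    rw [hF] at hmax
    rw [this, hsum, one_mul] at hmax
    linarith
  have hle : ∀ a ∈ Finset.univ, Real.negMulLog (π a) + π a * Real.log (p a) ≤ p a - π a :=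
    fun a _ => (aux_gibbs (π a) (p a) (hnn a) (hp a)).1
  have hsumeq : ∑ a, (Real.negMulLog (π a) + π a * Real.log (p a)) = ∑ a, (p a - π a) := by
    rw [key, Finset.sum_sub_distrib, hpsum, hsum, sub_self]
  have heach := (Finset.sum_eq_sum_iff_of_le hle).mp hsumeq
  intro a
  exact (aux_gibbs (π a) (p a) (hnn a) (hp a)).2 (heach a (Finset.mem_univ a))
end

section
/- Let S and A be finite nonempty types, let γ ∈ ℝ with 0 ≤ γ < 1, let P : S → A → S → ℝ be a transition kernel, let Q : S → A → ℝ, let ρUN : S → A → ℝ with 0 ≤ ρUN s a for all s, a, let μ0 : S → ℝ with 0 ≤ μ0 s for all s, and let ψ : ℝ → ℝ be convex and monotone nondecreasing. For π : S → A → ℝ define Vπ : S → ℝ by Vπ s = ∑ a, (π s a * Q s a + negMulLog (π s a)) and rπ : S → A → ℝ by rπ s a = Q s a − γ * ∑ s', P s a s' * Vπ s', and define L π = (∑ s, ∑ a, ρUN s a * rπ s a) − (1 − γ) * (∑ s, μ0 s * Vπ s) + (∑ s, ∑ a, ψ (rπ s a)). Then L is convex on the convex set of policies {π : S → A → ℝ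 | ∀ s, π s ∈ stdSimplex ℝ A}: ConvexOn ℝ {π | ∀ s, π s ∈ stdSimplex ℝ A} L. -/
/-- Convexity claim of Proposition 2(i): the objective `L(π, Q)` (for fixed
`Q`) is convex on the set of policies. -/
theorem stmt_5 {S A : Type*} [Fintype S] [Fintype A] [Nonempty S] [Nonempty A]
    (γ : ℝ) (hγ0 : 0 ≤ γ) (hγ1 : γ < 1)
    (P : S → A → S → ℝ)
    (hP0 : ∀ s a s', 0 ≤ P s a s') (hP1 : ∀ s a, ∑ s', P s a s' = 1)
    (Q : S → A → ℝ)
    (ρUN : S → A → ℝ) (hρUN : ∀ s a, 0 ≤ ρUN s a)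
    (μ0 : S → ℝ) (hμ0 : ∀ s, 0 ≤ μ0 s)
    (ψ : ℝ → ℝ) (hψconv : ConvexOn ℝ Set.univ ψ) (hψmono : Monotone ψ)
    (Vπ : (S → A → ℝ) → S → ℝ)
    (hVπ : ∀ π s, Vπ π s = ∑ a, (π s a * Q s a + Real.negMulLog (π s a)))
    (rπ : (S → A → ℝ) → S → A → ℝ)
    (hrπ : ∀ π s a, rπ π s a = Q s a - γ * ∑ s', P s a s' * Vπ π s')
    (L : (S → A → ℝ) → ℝ)
    (hL : ∀ π, L π = (∑ s, ∑ a, ρUN s a * rπ π s a)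
      - (1 - γ) * (∑ s, μ0 s * Vπ π s) + (∑ s, ∑ a, ψ (rπ π s a))) :
    ConvexOn ℝ {π : S → A → ℝ | ∀ s, π s ∈ stdSimplex ℝ A} L := by
  constructor
  · intro π hπ π' hπ' a b ha hb hab s
    exact (convex_stdSimplex ℝ A) (hπ s) (hπ' s) ha hb hab
  · intro π hπ π' hπ' a b ha hb hab
    set σ : S → A → ℝ := a • π + b • π' with hσ
    have hσeval : ∀ s x, σ s x = a * π s x + b * π' s x := fun s x => rfl
    -- V inequality
    have hV : ∀ s, a * Vπ π s + b * Vπ π' s ≤ Vπ σ s := by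
      intro s
      rw [hVπ, hVπ, hVπ, Finset.mul_sum, Finset.mul_sum, ← Finset.sum_add_distrib]
      apply Finset.sum_le_sum
      intro x _
      have hc := Real.concaveOn_negMulLog.2 (Set.mem_Ici.mpr ((hπ s).1 x))
        (Set.mem_Ici.mpr ((hπ' s).1 x)) ha hb hab
      simp only [smul_eq_mul] at hc
      rw [hσeval]
      nlinarith [hc]
    -- r inequality
    have hr : ∀ s x, rπ σ s x ≤ a * rπ π s x + b * rπ π' s x := by
      intro s x
      rw [hrπ, hrπ, hrπ]
      have hsum : ∑ s', P s x s' * (a * Vπ π s' + b * Vπ π' s')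
          ≤ ∑ s', P s x s' * Vπ σ s' := by
        apply Finset.sum_le_sum
        intro s' _
        exact mul_le_mul_of_nonneg_left (hV s') (hP0 s x s')
      have : γ * ∑ s', P s x s' * (a * Vπ π s' + b * Vπ π' s')
          ≤ γ * ∑ s', P s x s' * Vπ σ s' := mul_le_mul_of_nonneg_left hsum hγ0
      have hsplit : ∑ s', P s x s' * (a * Vπ π s' + b * Vπ π' s')
          = a * (∑ s', P s x s' * Vπ π s') + b * (∑ s', P s x s' * Vπ π' s') := by
        rw [Finset.mul_sum, Finset.mul_sum, ← Finset.sum_add_distrib]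
        exact Finset.sum_congr rfl fun s' _ => by ring
      rw [hsplit] at this
      have key : a * (Q s x - γ * ∑ s', P s x s' * Vπ π s')
          + b * (Q s x - γ * ∑ s', P s x s' * Vπ π' s')
          = Q s x - γ * (a * (∑ s', P s x s' * Vπ π s') + b * (∑ s', P s x s' * Vπ π' s')) := by
        linear_combination Q s x * hab
      linarith [this, key]
    -- combine
    rw [hL, hL, hL]
    have h1 : ∑ s, ∑ x, ρUN s x * rπ σ s x
        ≤ a * (∑ s, ∑ x, ρUN s x * rπ π s x) + b * (∑ s, ∑ x, ρUN s x * rπ π' s x) := by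
      rw [Finset.mul_sum, Finset.mul_sum, ← Finset.sum_add_distrib]
      apply Finset.sum_le_sum; intro s _
      rw [Finset.mul_sum, Finset.mul_sum, ← Finset.sum_add_distrib]
      apply Finset.sum_le_sum; intro x _
      have := mul_le_mul_of_nonneg_left (hr s x) (hρUN s x)
      nlinarith [this]
    have h2 : a * ((1 - γ) * ∑ s, μ0 s * Vπ π s) + b * ((1 - γ) * ∑ s, μ0 s * Vπ π' s)
        ≤ (1 - γ) * ∑ s, μ0 s * Vπ σ s := by
      have hsum : ∑ s, μ0 s * (a * Vπ π s + b * Vπ π' s) ≤ ∑ s, μ0 s * Vπ σ s := by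
        apply Finset.sum_le_sum
        intro s _
        exact mul_le_mul_of_nonneg_left (hV s) (hμ0 s)
      have hsplit : ∑ s, μ0 s * (a * Vπ π s + b * Vπ π' s)
          = a * (∑ s, μ0 s * Vπ π s) + b * (∑ s, μ0 s * Vπ π' s) := by
        rw [Finset.mul_sum, Finset.mul_sum, ← Finset.sum_add_distrib]
        exact Finset.sum_congr rfl fun s _ => by ring
      rw [hsplit] at hsum
      nlinarith [hsum, sub_nonneg.mpr hγ1.le]
    have h3 : ∑ s, ∑ x, ψ (rπ σ s x)
        ≤ a * (∑ s, ∑ x, ψ (rπ π s x)) + b * (∑ s, ∑ x, ψ (rπ π' s x)) := by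
      rw [Finset.mul_sum, Finset.mul_sum, ← Finset.sum_add_distrib]
      apply Finset.sum_le_sum; intro s _
      rw [Finset.mul_sum, Finset.mul_sum, ← Finset.sum_add_distrib]
      apply Finset.sum_le_sum; intro x _
      calc ψ (rπ σ s x) ≤ ψ (a * rπ π s x + b * rπ π' s x) := hψmono (hr s x)
        _ ≤ a * ψ (rπ π s x) + b * ψ (rπ π' s x) := by
            have := hψconv.2 (Set.mem_univ (rπ π s x)) (Set.mem_univ (rπ π' s x)) ha hb hab
            simpa using this
    simp only [smul_eq_mul]
    nlinarith [h1, h2, h3]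
end

section
/- Let S and A be finite nonempty types, let γ ∈ ℝ with 0 ≤ γ < 1, let P : S → A → S → ℝ be a transition kernel, let Q : S → A → ℝ, let ρUN : S → A → ℝ with 0 ≤ ρUN s a for all s, a, let μ0 : S → ℝ with 0 < μ0 s for all s, and let ψ : ℝ → ℝ be monotone nondecreasing. For π : S → A → ℝ define Vπ s = ∑ a, (π s a * Q s a + negMulLog (π s a)), rπ s a = Q s a − γ * ∑ s', P s a s' * Vπ s', and L π = (∑ s, ∑ a, ρUN s a * rπ s a) − (1 − γ) * (∑ s, μ0 s * Vπ s) + (∑ s, ∑ a, ψ (rπ s a)). Define the softmax policy πQ by πQ s a = exp (Q s a) / ∑ a', exp (Q s a'). Then πQ is a policy (πQ s ∈ stdSimplex ℝ A for all s), L πQ ≤ L π for every policy π, and if π is a policy with L π = L πQ then π = πQ; i.e., πQ is the unique minimizer of L over policies. -/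
/-!
Per state, the entropy-regularized value of a distribution `p` against the scores `q` equals
`log ∑ exp q` minus the Kullback–Leibler divergence of `p` from `softmax q` (Gibbs' variational
principle), so `softmax q` is its unique maximizer. The objective `L` depends on the policy only
through the value vector `v = Vπ π`, and as a function of `v` it is strictly antitone: the rewards
`Q - γ P v` decrease with `v` (as do the `ρUN`- and `ψ`-terms), while `-(1 - γ) ∑ μ0 v` strictly
decreases since `μ0 > 0` and `γ < 1`. Hence the softmax policy, which maximizes every `Vπ π s`,
is the unique minimizer.
-/

open Finset InformationTheory

section Softmax

open Real

variable {A : Type*} [Fintype A]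

noncomputable def softmax (q : A → ℝ) (a : A) : ℝ := exp (q a) / ∑ a', exp (q a')

variable [Nonempty A]

lemma sum_exp_pos (q : A → ℝ) : 0 < ∑ a, exp (q a) :=
  sum_pos (fun a _ => exp_pos (q a)) univ_nonempty

lemma softmax_pos (q : A → ℝ) (a : A) : 0 < softmax q a :=
  div_pos (exp_pos _) (sum_exp_pos q)

lemma softmax_mem_stdSimplex (q : A → ℝ) : softmax q ∈ stdSimplex ℝ A :=
  ⟨fun a => (softmax_pos q a).le, by
    simp only [softmax, ← sum_div]
    exact div_self (sum_exp_pos q).ne'⟩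

lemma log_softmax (q : A → ℝ) (a : A) :
    log (softmax q a) = q a - log (∑ a', exp (q a')) := by
  rw [softmax, log_div (exp_pos _).ne' (sum_exp_pos q).ne', log_exp]

end Softmax

open Real in
lemma mul_add_negMulLog_eq {x σ : ℝ} (c : ℝ) (hσ : 0 < σ) :
    x * (log σ + c) + negMulLog x = x * c + σ - x - σ * klFun (x / σ) := by
  rcases eq_or_ne x 0 with rfl | hx
  · simp [klFun]
  · rw [klFun, negMulLog, log_div hx hσ.ne']
    field_simp
    ring

section Gibbs

open Real

variable {A : Type*} [Fintype A] [Nonempty A]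

lemma sum_mul_add_negMulLog_eq (q p : A → ℝ) (hp : ∑ a, p a = 1) :
    ∑ a, (p a * q a + negMulLog (p a))
      = log (∑ a, exp (q a)) - ∑ a, softmax q a * klFun (p a / softmax q a) := by
  have hq : ∀ a, q a = log (softmax q a) + log (∑ a', exp (q a')) := fun a => by
    rw [log_softmax]; ring
  have hσ : ∑ a, softmax q a = 1 := (softmax_mem_stdSimplex q).2
  simp_rw [fun a => congrArg (p a * ·) (hq a),
    fun a => mul_add_negMulLog_eq (x := p a) (log (∑ a', exp (q a'))) (softmax_pos q a),
    sum_sub_distrib, sum_add_distrib, ← sum_mul, hp, hσ]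
  ring

lemma sum_mul_add_negMulLog_le (q : A → ℝ) {p : A → ℝ} (hp : p ∈ stdSimplex ℝ A) :
    ∑ a, (p a * q a + negMulLog (p a)) ≤ log (∑ a, exp (q a)) := by
  rw [sum_mul_add_negMulLog_eq q p hp.2, sub_le_self_iff]
  exact sum_nonneg fun a _ =>
    mul_nonneg (softmax_pos q a).le (klFun_nonneg (div_nonneg (hp.1 a) (softmax_pos q a).le))

lemma sum_mul_add_negMulLog_eq_iff (q : A → ℝ) {p : A → ℝ} (hp : p ∈ stdSimplex ℝ A) :
    ∑ a, (p a * q a + negMulLog (p a)) = log (∑ a, exp (q a)) ↔ p = softmax q := by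
  have hratio : ∀ a, 0 ≤ p a / softmax q a := fun a => div_nonneg (hp.1 a) (softmax_pos q a).le
  rw [sum_mul_add_negMulLog_eq q p hp.2, sub_eq_self,
    sum_eq_zero_iff_of_nonneg fun a _ => mul_nonneg (softmax_pos q a).le (klFun_nonneg (hratio a))]
  simp only [mem_univ, true_implies, mul_eq_zero, (softmax_pos q _).ne', false_or,
    klFun_eq_zero_iff (hratio _), div_eq_one_iff_eq (softmax_pos q _).ne', funext_iff]

end Gibbs

section Loss

variable {S A : Type*} [Fintype S] [Fintype A]

/-- The objective `L` of the theorem, as a function of the policy's value vector `v = Vπ π`. -/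
def valueLoss (γ : ℝ) (P : S → A → S → ℝ) (Q ρ : S → A → ℝ) (μ : S → ℝ) (ψ : ℝ → ℝ)
    (v : S → ℝ) : ℝ :=
  (∑ s, ∑ a, ρ s a * (Q s a - γ * ∑ s', P s a s' * v s')) - (1 - γ) * (∑ s, μ s * v s)
    + ∑ s, ∑ a, ψ (Q s a - γ * ∑ s', P s a s' * v s')

lemma strictAnti_valueLoss {γ : ℝ} (hγ0 : 0 ≤ γ) (hγ1 : γ < 1) {P : S → A → S → ℝ}
    (hP : ∀ s a s', 0 ≤ P s a s') (Q : S → A → ℝ) {ρ : S → A → ℝ} (hρ : ∀ s a, 0 ≤ ρ s a)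
    {μ : S → ℝ} (hμ : ∀ s, 0 < μ s) {ψ : ℝ → ℝ} (hψ : Monotone ψ) :
    StrictAnti (valueLoss γ P Q ρ μ ψ) := by
  intro v w hvw
  have hr : ∀ s a, Q s a - γ * ∑ s', P s a s' * w s' ≤ Q s a - γ * ∑ s', P s a s' * v s' :=
    fun s a => sub_le_sub_left (mul_le_mul_of_nonneg_left
      (sum_le_sum fun s' _ => mul_le_mul_of_nonneg_left (hvw.le s') (hP s a s')) hγ0) _
  have hρ_le := sum_le_sum fun s (_ : s ∈ univ) => sum_le_sum fun a (_ : a ∈ univ) =>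
    mul_le_mul_of_nonneg_left (hr s a) (hρ s a)
  have hψ_le := sum_le_sum fun s (_ : s ∈ univ) => sum_le_sum fun a (_ : a ∈ univ) =>
    hψ (hr s a)
  obtain ⟨s₀, hs₀⟩ := (Pi.lt_def.1 hvw).2
  have hμ_lt : ∑ s, μ s * v s < ∑ s, μ s * w s :=
    sum_lt_sum (fun s _ => mul_le_mul_of_nonneg_left (hvw.le s) (hμ s).le)
      ⟨s₀, mem_univ _, mul_lt_mul_of_pos_left hs₀ (hμ s₀)⟩
  have := mul_lt_mul_of_pos_left hμ_lt (sub_pos.2 hγ1)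
  simp only [valueLoss]
  linarith

end Loss

theorem stmt_6_general {S A : Type*} [Fintype S] [Fintype A] [Nonempty A]
    (γ : ℝ) (hγ0 : 0 ≤ γ) (hγ1 : γ < 1)
    (P : S → A → S → ℝ)
    (hP0 : ∀ s a s', 0 ≤ P s a s')
    (Q : S → A → ℝ)
    (ρUN : S → A → ℝ) (hρUN : ∀ s a, 0 ≤ ρUN s a)
    (μ0 : S → ℝ) (hμ0 : ∀ s, 0 < μ0 s)
    (ψ : ℝ → ℝ) (hψmono : Monotone ψ)
    (Vπ : (S → A → ℝ) → S → ℝ)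
    (hVπ : ∀ π s, Vπ π s = ∑ a, (π s a * Q s a + Real.negMulLog (π s a)))
    (rπ : (S → A → ℝ) → S → A → ℝ)
    (hrπ : ∀ π s a, rπ π s a = Q s a - γ * ∑ s', P s a s' * Vπ π s')
    (L : (S → A → ℝ) → ℝ)
    (hL : ∀ π, L π = (∑ s, ∑ a, ρUN s a * rπ π s a)
      - (1 - γ) * (∑ s, μ0 s * Vπ π s) + (∑ s, ∑ a, ψ (rπ π s a)))
    (πQ : S → A → ℝ)
    (hπQ : ∀ s a, πQ s a = Real.exp (Q s a) / ∑ a', Real.exp (Q s a')) :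
    (∀ s, πQ s ∈ stdSimplex ℝ A) ∧
    (∀ π : S → A → ℝ, (∀ s, π s ∈ stdSimplex ℝ A) → L πQ ≤ L π) ∧
    (∀ π : S → A → ℝ, (∀ s, π s ∈ stdSimplex ℝ A) → L π = L πQ → π = πQ) := by
  obtain rfl : πQ = fun s => softmax (Q s) := funext fun s => funext (hπQ s)
  have hVQ : ∀ s, Vπ (fun s => softmax (Q s)) s = Real.log (∑ a, Real.exp (Q s a)) := fun s => by
    rw [hVπ]; exact (sum_mul_add_negMulLog_eq_iff (Q s) (softmax_mem_stdSimplex _)).2 rfl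
  have hV_le : ∀ π, (∀ s, π s ∈ stdSimplex ℝ A) → Vπ π ≤ Vπ fun s => softmax (Q s) :=
    fun π hπ s => by rw [hVπ, hVQ]; exact sum_mul_add_negMulLog_le (Q s) (hπ s)
  have hL_eq : ∀ π, L π = valueLoss γ P Q ρUN μ0 ψ (Vπ π) := fun π => by
    simp only [hL, hrπ, valueLoss]
  have hloss := strictAnti_valueLoss hγ0 hγ1 hP0 Q hρUN hμ0 hψmono
  refine ⟨fun s => softmax_mem_stdSimplex (Q s), fun π hπ => ?_, fun π hπ hLπ => ?_⟩
  · rw [hL_eq, hL_eq]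
    exact hloss.antitone (hV_le π hπ)
  · have hV_eq : Vπ π = Vπ fun s => softmax (Q s) := by
      by_contra hne
      exact (hloss ((hV_le π hπ).lt_of_ne hne)).ne' (by rw [← hL_eq, ← hL_eq, hLπ])
    funext s
    rw [← sum_mul_add_negMulLog_eq_iff (Q s) (hπ s), ← hVπ, hV_eq, hVQ]

/-- Unique-minimizer claim of Proposition 2(i): the softmax policy `πQ` is the
unique minimizer of `L(·, Q)` over the set of policies. -/
theorem stmt_6 {S A : Type*} [Fintype S] [Fintype A] [Nonempty S] [Nonempty A]
    (γ : ℝ) (hγ0 : 0 ≤ γ) (hγ1 : γ < 1)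
    (P : S → A → S → ℝ)
    (hP0 : ∀ s a s', 0 ≤ P s a s') (hP1 : ∀ s a, ∑ s', P s a s' = 1)
    (Q : S → A → ℝ)
    (ρUN : S → A → ℝ) (hρUN : ∀ s a, 0 ≤ ρUN s a)
    (μ0 : S → ℝ) (hμ0 : ∀ s, 0 < μ0 s)
    (ψ : ℝ → ℝ) (hψmono : Monotone ψ)
    (Vπ : (S → A → ℝ) → S → ℝ)
    (hVπ : ∀ π s, Vπ π s = ∑ a, (π s a * Q s a + Real.negMulLog (π s a)))
    (rπ : (S → A → ℝ) → S → A → ℝ)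
    (hrπ : ∀ π s a, rπ π s a = Q s a - γ * ∑ s', P s a s' * Vπ π s')
    (L : (S → A → ℝ) → ℝ)
    (hL : ∀ π, L π = (∑ s, ∑ a, ρUN s a * rπ π s a)
      - (1 - γ) * (∑ s, μ0 s * Vπ π s) + (∑ s, ∑ a, ψ (rπ π s a)))
    (πQ : S → A → ℝ)
    (hπQ : ∀ s a, πQ s a = Real.exp (Q s a) / ∑ a', Real.exp (Q s a')) :
    (∀ s, πQ s ∈ stdSimplex ℝ A) ∧
    (∀ π : S → A → ℝ, (∀ s, π s ∈ stdSimplex ℝ A) → L πQ ≤ L π) ∧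
    (∀ π : S → A → ℝ, (∀ s, π s ∈ stdSimplex ℝ A) → L π = L πQ → π = πQ) :=
  stmt_6_general γ hγ0 hγ1 P hP0 Q ρUN hρUN μ0 hμ0 ψ hψmono Vπ hVπ rπ hrπ L hL πQ hπQ
end

section
/- Let S and A be finite nonempty types, let γ ∈ ℝ, let μ0 : S → ℝ, let P : S → A → S → ℝ, let π : S → A → ℝ satisfy ∑ a, π s a = 1 for every s, and let ρ : S → A → ℝ satisfy the Bellman flow equation ρ s a = π s a * ((1 − γ) * μ0 s + γ * ∑ s', ∑ a', ρ s' a' * P s' a' s) for all s, a. Then for every f : S → ℝ: ∑ s, ∑ a, ρ s a * (f s − γ * ∑ s', P s a s' * f s') = (1 − γ) * ∑ s, μ0 s * f s. -/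
/-- Telescoping identity for occupancy measures: if `ρ` satisfies the Bellman
flow equation for policy `π` with initial distribution `μ0`, then
`E_ρ[f(s) - γ E_{s'∼P}[f(s')]] = (1 - γ) E_{μ0}[f]` for every `f : S → ℝ`. -/
theorem stmt_8 {S A : Type*} [Fintype S] [Fintype A] [Nonempty S] [Nonempty A]
    (γ : ℝ) (μ0 : S → ℝ) (P : S → A → S → ℝ)
    (π : S → A → ℝ) (hπ : ∀ s, ∑ a, π s a = 1)
    (ρ : S → A → ℝ)
    (hρ : ∀ s a, ρ s a =
      π s a * ((1 - γ) * μ0 s + γ * ∑ s', ∑ a', ρ s' a' * P s' a' s)) :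
    ∀ f : S → ℝ,
      ∑ s, ∑ a, ρ s a * (f s - γ * ∑ s', P s a s' * f s')
        = (1 - γ) * ∑ s, μ0 s * f s := by
  intro f
  have key : ∀ s, ∑ a, ρ s a
      = (1 - γ) * μ0 s + γ * ∑ s', ∑ a', ρ s' a' * P s' a' s := by
    intro s
    calc ∑ a, ρ s a
        = ∑ a, π s a * ((1 - γ) * μ0 s + γ * ∑ s', ∑ a', ρ s' a' * P s' a' s) :=
          Finset.sum_congr rfl fun a _ => hρ s a
      _ = (∑ a, π s a) * ((1 - γ) * μ0 s + γ * ∑ s', ∑ a', ρ s' a' * P s' a' s) :=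
          (Finset.sum_mul _ _ _).symm
      _ = _ := by rw [hπ]; ring
  have hcross : ∑ s, ∑ a, ρ s a * (γ * ∑ s', P s a s' * f s')
      = γ * ∑ s', (∑ s, ∑ a, ρ s a * P s a s') * f s' := by
    calc ∑ s, ∑ a, ρ s a * (γ * ∑ s', P s a s' * f s')
        = ∑ s, ∑ a, ∑ s', γ * (ρ s a * P s a s' * f s') := by
          refine Finset.sum_congr rfl fun s _ => Finset.sum_congr rfl fun a _ => ?_
          rw [Finset.mul_sum, Finset.mul_sum]
          exact Finset.sum_congr rfl fun s' _ => by ring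
      _ = ∑ s, ∑ s', ∑ a, γ * (ρ s a * P s a s' * f s') :=
          Finset.sum_congr rfl fun s _ => Finset.sum_comm
      _ = ∑ s', ∑ s, ∑ a, γ * (ρ s a * P s a s' * f s') := Finset.sum_comm
      _ = γ * ∑ s', (∑ s, ∑ a, ρ s a * P s a s') * f s' := by
          rw [Finset.mul_sum]
          refine Finset.sum_congr rfl fun s' _ => ?_
          rw [Finset.sum_mul, Finset.mul_sum]
          refine Finset.sum_congr rfl fun s _ => ?_
          rw [Finset.sum_mul, Finset.mul_sum]
  have h1 : ∑ s, ∑ a, ρ s a * (f s - γ * ∑ s', P s a s' * f s')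
      = (∑ s, (∑ a, ρ s a) * f s)
        - γ * ∑ s', (∑ s, ∑ a, ρ s a * P s a s') * f s' := by
    rw [← hcross, ← Finset.sum_sub_distrib]
    refine Finset.sum_congr rfl fun s _ => ?_
    rw [Finset.sum_mul, ← Finset.sum_sub_distrib]
    exact Finset.sum_congr rfl fun a _ => by ring
  rw [h1]
  simp_rw [key, add_mul, Finset.sum_add_distrib]
  have h3 : ∑ s, γ * (∑ s', ∑ a', ρ s' a' * P s' a' s) * f s
      = γ * ∑ s', (∑ s, ∑ a, ρ s a * P s a s') * f s' := by
    rw [Finset.mul_sum]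
    exact Finset.sum_congr rfl fun s _ => by ring
  rw [h3]
  rw [Finset.mul_sum]
  ring_nf
  rw [Finset.sum_add_distrib]
  congr 1
  rw [Finset.mul_sum, ← Finset.sum_neg_distrib]
  exact Finset.sum_congr rfl fun s _ => by ring
end

section
/- Let S and A be finite nonempty types, let γ ∈ ℝ, let μ0 : S → ℝ, let P : S → A → S → ℝ, let Q : S → A → ℝ, let π : S → A → ℝ satisfy π s a > 0 for all s, a and ∑ a, π s a = 1 for every s, and let ρ : S → A → ℝ satisfy the Bellman flow equation ρ s a = π s a * ((1 − γ) * μ0 s + γ * ∑ s', ∑ a', ρ s' a' * P s' a' s) for all s, a. Define Vπ : S → ℝ by Vπ s = ∑ a, π s a * (Q s a − log (π s a)). Then ∑ s, ∑ a, ρ s a * (Q s a − log (π s a) − γ * ∑ s', P s a s' * Vπ s') = (1 − γ) * ∑ s, μ0 s * Vπ s. -/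
/-- Identity from the proof of Proposition 2:
`E_{ρπ}[T^π[Q](s,a)] + H(π) = (1 - γ) E_{s0∼μ0}[V^π(s0)]`, where `ρ` is the
occupancy measure of the everywhere-positive policy `π` (Bellman flow
equation) and `Vπ` is the soft state value. -/
theorem stmt_9 {S A : Type*} [Fintype S] [Fintype A] [Nonempty S] [Nonempty A]
    (γ : ℝ) (μ0 : S → ℝ) (P : S → A → S → ℝ) (Q : S → A → ℝ)
    (π : S → A → ℝ) (hπpos : ∀ s a, π s a > 0) (hπ : ∀ s, ∑ a, π s a = 1)
    (ρ : S → A → ℝ)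
    (hρ : ∀ s a, ρ s a =
      π s a * ((1 - γ) * μ0 s + γ * ∑ s', ∑ a', ρ s' a' * P s' a' s))
    (Vπ : S → ℝ)
    (hVπ : ∀ s, Vπ s = ∑ a, π s a * (Q s a - Real.log (π s a))) :
    ∑ s, ∑ a, ρ s a *
        (Q s a - Real.log (π s a) - γ * ∑ s', P s a s' * Vπ s')
      = (1 - γ) * ∑ s, μ0 s * Vπ s := by
  have h1 : ∀ s a, ρ s a * (Q s a - Real.log (π s a) - γ * ∑ s', P s a s' * Vπ s')
      = ρ s a * (Q s a - Real.log (π s a)) - ∑ s', γ * (ρ s a * P s a s' * Vπ s') := by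
    intro s a
    have : ∑ s', γ * (ρ s a * P s a s' * Vπ s')
        = ρ s a * (γ * ∑ s', P s a s' * Vπ s') := by
      rw [Finset.mul_sum, Finset.mul_sum]
      exact Finset.sum_congr rfl fun s' _ => by ring
    rw [this]; ring
  simp_rw [h1, Finset.sum_sub_distrib]
  have h2 : ∀ s, ∑ a, ρ s a * (Q s a - Real.log (π s a))
      = ((1 - γ) * μ0 s + γ * ∑ s', ∑ a', ρ s' a' * P s' a' s) * Vπ s := by
    intro s
    rw [hVπ, Finset.mul_sum]
    refine Finset.sum_congr rfl fun a _ => ?_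
    rw [hρ s a]; ring
  simp_rw [h2]
  have h3 : ∑ s, ∑ a, ∑ s', γ * (ρ s a * P s a s' * Vπ s')
      = ∑ s', γ * ((∑ s, ∑ a, ρ s a * P s a s') * Vπ s') := by
    have e : ∀ s' : S, γ * ((∑ s, ∑ a, ρ s a * P s a s') * Vπ s')
        = ∑ s, ∑ a, γ * (ρ s a * P s a s' * Vπ s') := by
      intro s'
      simp only [Finset.sum_mul, Finset.mul_sum]
    simp_rw [e]
    exact (Finset.sum_congr rfl fun s _ => Finset.sum_comm).trans Finset.sum_comm
  rw [h3]
  rw [← Finset.sum_sub_distrib, Finset.mul_sum]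
  refine Finset.sum_congr rfl fun s _ => ?_
  ring
end

section
/- Let I be a finite nonempty type and ρUN, ρMIX : I → ℝ with ρUN i > 0 and ρMIX i > 0 for all i. Define g : (I → ℝ) × (I → ℝ) → ℝ by g (μ1, μ2) = (∑ i, ρMIX i * log (μ2 i * (1 − μ1 i))) + (∑ i, ρUN i * log (μ1 i * (1 − μ2 i))). Then g is strictly concave on the convex set D = {(μ1, μ2) | ∀ i, (0 < μ1 i ∧ μ1 i < 1) ∧ (0 < μ2 i ∧ μ2 i < 1)}: StrictConcaveOn ℝ D g. -/
open Real Finset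

private lemma log_cc {a b p q : ℝ} (ha : 0 ≤ a) (hb : 0 ≤ b) (hab : a + b = 1)
    (hp : 0 < p) (hq : 0 < q) :
    a * Real.log p + b * Real.log q ≤ Real.log (a * p + b * q) := by
  have := strictConcaveOn_log_Ioi.concaveOn.2 (Set.mem_Ioi.2 hp)
    (Set.mem_Ioi.2 hq) ha hb hab
  simpa [smul_eq_mul] using this

private lemma log_cc_lt {a b p q : ℝ} (ha : 0 < a) (hb : 0 < b) (hab : a + b = 1)
    (hp : 0 < p) (hq : 0 < q) (hpq : p ≠ q) :
    a * Real.log p + b * Real.log q < Real.log (a * p + b * q) := by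
  have := strictConcaveOn_log_Ioi.2 (Set.mem_Ioi.2 hp)
    (Set.mem_Ioi.2 hq) hpq ha hb hab
  simpa [smul_eq_mul] using this

/-- Strict concavity in Proposition 3: the discriminator objective `g` is
strictly concave on the set of pairs of functions with values in `(0, 1)`. -/
theorem stmt_11 {I : Type*} [Fintype I] [Nonempty I]
    (ρUN ρMIX : I → ℝ) (hUN : ∀ i, ρUN i > 0) (hMIX : ∀ i, ρMIX i > 0)
    (g : (I → ℝ) × (I → ℝ) → ℝ)
    (hg : ∀ μ : (I → ℝ) × (I → ℝ),
      g μ = (∑ i, ρMIX i * Real.log (μ.2 i * (1 - μ.1 i)))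
          + (∑ i, ρUN i * Real.log (μ.1 i * (1 - μ.2 i)))) :
    StrictConcaveOn ℝ
      {μ : (I → ℝ) × (I → ℝ) |
        ∀ i, (0 < μ.1 i ∧ μ.1 i < 1) ∧ (0 < μ.2 i ∧ μ.2 i < 1)} g := by
  constructor
  · intro x hx y hy a b ha hb hab
    intro i
    have h1 := (convex_Ioo (0:ℝ) 1) ⟨(hx i).1.1, (hx i).1.2⟩ ⟨(hy i).1.1, (hy i).1.2⟩ ha hb hab
    have h2 := (convex_Ioo (0:ℝ) 1) ⟨(hx i).2.1, (hx i).2.2⟩ ⟨(hy i).2.1, (hy i).2.2⟩ ha hb hab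
    exact ⟨⟨h1.1, h1.2⟩, ⟨h2.1, h2.2⟩⟩
  · intro x hx y hy hxy a b ha hb hab
    set F : I → ((I → ℝ) × (I → ℝ)) → ℝ := fun i μ =>
      ρMIX i * Real.log (μ.2 i * (1 - μ.1 i)) + ρUN i * Real.log (μ.1 i * (1 - μ.2 i)) with hF
    have hgsum : ∀ μ, g μ = ∑ i, F i μ := by
      intro μ; rw [hg μ, ← Finset.sum_add_distrib]
    have hz : ∀ i, ((a • x + b • y).1 i = a * x.1 i + b * y.1 i) ∧
        ((a • x + b • y).2 i = a * x.2 i + b * y.2 i) := by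
      intro i; constructor <;> simp [smul_eq_mul]
    -- key per-coordinate inequality
    have key : ∀ i, a * F i x + b * F i y ≤ F i (a • x + b • y) ∧
        (x.1 i ≠ y.1 i ∨ x.2 i ≠ y.2 i → a * F i x + b * F i y < F i (a • x + b • y)) := by
      intro i
      obtain ⟨⟨hp1, hp1'⟩, hp2, hp2'⟩ := hx i
      obtain ⟨⟨hq1, hq1'⟩, hq2, hq2'⟩ := hy i
      set p1 := x.1 i; set p2 := x.2 i; set q1 := y.1 i; set q2 := y.2 i
      have hz1 : (a • x + b • y).1 i = a * p1 + b * q1 := (hz i).1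
      have hz2 : (a • x + b • y).2 i = a * p2 + b * q2 := (hz i).2
      have hzp1 : 0 < a * p1 + b * q1 := by positivity
      have hzp2 : 0 < a * p2 + b * q2 := by positivity
      have h1p1 : 0 < 1 - p1 := by linarith
      have h1q1 : 0 < 1 - q1 := by linarith
      have h1p2 : 0 < 1 - p2 := by linarith
      have h1q2 : 0 < 1 - q2 := by linarith
      have hz1' : 0 < 1 - (a * p1 + b * q1) := by nlinarith
      have hz2' : 0 < 1 - (a * p2 + b * q2) := by nlinarith
      have e1 : 1 - (a * p1 + b * q1) = a * (1 - p1) + b * (1 - q1) := by linarith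
      have e2 : 1 - (a * p2 + b * q2) = a * (1 - p2) + b * (1 - q2) := by linarith
      -- nonstrict pieces
      have A : a * Real.log p2 + b * Real.log q2 ≤ Real.log (a * p2 + b * q2) :=
        log_cc ha.le hb.le hab hp2 hq2
      have B : a * Real.log (1 - p1) + b * Real.log (1 - q1) ≤
          Real.log (1 - (a * p1 + b * q1)) := by
        rw [e1]; exact log_cc ha.le hb.le hab h1p1 h1q1
      have C : a * Real.log p1 + b * Real.log q1 ≤ Real.log (a * p1 + b * q1) :=
        log_cc ha.le hb.le hab hp1 hq1
      have D : a * Real.log (1 - p2) + b * Real.log (1 - q2) ≤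
          Real.log (1 - (a * p2 + b * q2)) := by
        rw [e2]; exact log_cc ha.le hb.le hab h1p2 h1q2
      have hM := hMIX i; have hU := hUN i
      have expand : F i x = ρMIX i * (Real.log p2 + Real.log (1 - p1)) +
          ρUN i * (Real.log p1 + Real.log (1 - p2)) := by
        simp only [hF]; rw [Real.log_mul hp2.ne' h1p1.ne', Real.log_mul hp1.ne' h1p2.ne']
      have expandy : F i y = ρMIX i * (Real.log q2 + Real.log (1 - q1)) +
          ρUN i * (Real.log q1 + Real.log (1 - q2)) := by
        simp only [hF]; rw [Real.log_mul hq2.ne' h1q1.ne', Real.log_mul hq1.ne' h1q2.ne']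
      have expandz : F i (a • x + b • y) =
          ρMIX i * (Real.log (a * p2 + b * q2) + Real.log (1 - (a * p1 + b * q1))) +
          ρUN i * (Real.log (a * p1 + b * q1) + Real.log (1 - (a * p2 + b * q2))) := by
        simp only [hF, hz1, hz2]
        rw [Real.log_mul hzp2.ne' hz1'.ne', Real.log_mul hzp1.ne' hz2'.ne']
      have H1 := mul_le_mul_of_nonneg_left (add_le_add A B) hM.le
      have H2 := mul_le_mul_of_nonneg_left (add_le_add C D) hU.le
      constructor
      · rw [expand, expandy, expandz]; linarith [H1, H2]
      · rintro (h | h)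
        · have C' : a * Real.log p1 + b * Real.log q1 < Real.log (a * p1 + b * q1) :=
            log_cc_lt ha hb hab hp1 hq1 h
          have H2' := mul_lt_mul_of_pos_left (add_lt_add_of_lt_of_le C' D) hU
          rw [expand, expandy, expandz]; linarith [H1, H2']
        · have A' : a * Real.log p2 + b * Real.log q2 < Real.log (a * p2 + b * q2) :=
            log_cc_lt ha hb hab hp2 hq2 h
          have H1' := mul_lt_mul_of_pos_left (add_lt_add_of_lt_of_le A' B) hM
          rw [expand, expandy, expandz]; linarith [H1', H2]
    -- some coordinate differs
    have hdiff : ∃ i, x.1 i ≠ y.1 i ∨ x.2 i ≠ y.2 i := by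
      by_contra h
      push_neg at h
      apply hxy
      ext i
      · exact (h i).1
      · exact (h i).2
    obtain ⟨i0, hi0⟩ := hdiff
    have main : ∑ i, (a * F i x + b * F i y) < ∑ i, F i (a • x + b • y) := by
      apply Finset.sum_lt_sum
      · intro i _; exact (key i).1
      · exact ⟨i0, Finset.mem_univ i0, (key i0).2 hi0⟩
    calc a • g x + b • g y = ∑ i, (a * F i x + b * F i y) := by
          rw [hgsum x, hgsum y, smul_eq_mul, smul_eq_mul, Finset.mul_sum,
            Finset.mul_sum, ← Finset.sum_add_distrib]
      _ < ∑ i, F i (a • x + b • y) := main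
      _ = g (a • x + b • y) := (hgsum _).symm
end

section
/- Let I be a finite nonempty type and ρUN, ρMIX : I → ℝ with ρUN i > 0 and ρMIX i > 0 for all i. Define g : (I → ℝ) × (I → ℝ) → ℝ by g (μ1, μ2) = (∑ i, ρMIX i * log (μ2 i * (1 − μ1 i))) + (∑ i, ρUN i * log (μ1 i * (1 − μ2 i))), and let D = {(μ1, μ2) | ∀ i, (0 < μ1 i ∧ μ1 i < 1) ∧ (0 < μ2 i ∧ μ2 i < 1)}. Define μ1* i = ρUN i / (ρUN i + ρMIX i) and μ2* i = ρMIX i / (ρUN i + ρMIX i). Then (μ1*, μ2*) ∈ D; g (μ1, μ2) ≤ g (μ1*, μ2*) for every (μ1, μ2) ∈ D, with equality only if (μ1, μ2) = (μ1*, μ2*); and μ1* i / μ2* i = ρUN i / ρMIX i for every i. -/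
/-!
Each summand of `g` splits as `(a log x + b log (1 - x)) + (b log y + a log (1 - y))` with
`a = ρUN i`, `b = ρMIX i`, `x = μ1 i`, `y = μ2 i`, and the two brackets are maximized
independently. By binary Gibbs' inequality, `a log x + b log (1 - x)` is maximal exactly at
`x = a / (a + b)`: the bound `log t ≤ t - 1`, weighted by `a` at `t = x / (a / (a + b))` and
by `b` at `t = (1 - x) / (b / (a + b))`, has right-hand sides summing to zero, and it is strict
away from `t = 1`.
-/

open Real Finset

lemma div_add_mem_Ioo {a b : ℝ} (ha : 0 < a) (hb : 0 < b) : a / (a + b) ∈ Set.Ioo 0 1 :=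
  ⟨by positivity, (div_lt_one (by positivity)).2 (by linarith)⟩

lemma one_sub_div_add {a b : ℝ} (ha : 0 < a) (hb : 0 < b) : 1 - a / (a + b) = b / (a + b) := by
  field_simp
  ring

lemma mul_log_sub_mul_log_div_lt {c s z : ℝ} (hc : 0 < c) (hs : 0 < s) (hz : 0 < z)
    (hne : z ≠ c / s) : c * log z - c * log (c / s) < s * z - c := by
  have hcs : 0 < c / s := by positivity
  have hlog : log (z / (c / s)) < z / (c / s) - 1 :=
    log_lt_sub_one_of_pos (by positivity) (by rwa [ne_eq, div_eq_one_iff_eq hcs.ne'])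
  rw [log_div hz.ne' hcs.ne'] at hlog
  calc c * log z - c * log (c / s) = c * (log z - log (c / s)) := by ring
    _ < c * (z / (c / s) - 1) := mul_lt_mul_of_pos_left hlog hc
    _ = s * z - c := by field_simp

theorem mul_log_add_mul_log_lt_of_add_eq_one {a b x y : ℝ} (ha : 0 < a) (hb : 0 < b)
    (hx : 0 < x) (hy : 0 < y) (hxy : x + y = 1) (hne : x ≠ a / (a + b)) :
    a * log x + b * log y < a * log (a / (a + b)) + b * log (b / (a + b)) := by
  have hne' : y ≠ b / (a + b) := by
    rw [← one_sub_div_add ha hb]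
    contrapose! hne
    linarith
  have hx' := mul_log_sub_mul_log_div_lt ha (add_pos ha hb) hx hne
  have hy' := mul_log_sub_mul_log_div_lt hb (add_pos ha hb) hy hne'
  linear_combination hx' + hy' + (a + b) * hxy

theorem mul_log_add_mul_log_eq_iff_of_add_eq_one {a b x y : ℝ} (ha : 0 < a) (hb : 0 < b)
    (hx : 0 < x) (hy : 0 < y) (hxy : x + y = 1) :
    a * log x + b * log y = a * log (a / (a + b)) + b * log (b / (a + b)) ↔ x = a / (a + b) := by
  refine ⟨fun h => by_contra fun hne =>
    (mul_log_add_mul_log_lt_of_add_eq_one ha hb hx hy hxy hne).ne h, ?_⟩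
  rintro rfl
  rw [eq_sub_of_add_eq' hxy, one_sub_div_add ha hb]

theorem mul_log_add_mul_log_le_of_add_eq_one {a b x y : ℝ} (ha : 0 < a) (hb : 0 < b)
    (hx : 0 < x) (hy : 0 < y) (hxy : x + y = 1) :
    a * log x + b * log y ≤ a * log (a / (a + b)) + b * log (b / (a + b)) := by
  rcases eq_or_ne x (a / (a + b)) with h | h
  · exact ((mul_log_add_mul_log_eq_iff_of_add_eq_one ha hb hx hy hxy).2 h).le
  · exact (mul_log_add_mul_log_lt_of_add_eq_one ha hb hx hy hxy h).le

noncomputable def discriminatorTerm (a b x y : ℝ) : ℝ :=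
  b * log (y * (1 - x)) + a * log (x * (1 - y))

section discriminatorTerm

variable {a b x y : ℝ}

lemma discriminatorTerm_eq (hx : x ∈ Set.Ioo 0 1) (hy : y ∈ Set.Ioo 0 1) :
    discriminatorTerm a b x y
      = (a * log x + b * log (1 - x)) + (b * log y + a * log (1 - y)) := by
  obtain ⟨hx0, hx1⟩ := hx
  obtain ⟨hy0, hy1⟩ := hy
  rw [discriminatorTerm, log_mul hy0.ne' (by linarith), log_mul hx0.ne' (by linarith)]
  ring

lemma discriminatorTerm_div_add (ha : 0 < a) (hb : 0 < b) :
    discriminatorTerm a b (a / (a + b)) (b / (a + b))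
      = (a * log (a / (a + b)) + b * log (b / (a + b)))
        + (b * log (b / (b + a)) + a * log (a / (b + a))) := by
  have hb' : b / (a + b) ∈ Set.Ioo 0 1 := by rw [add_comm]; exact div_add_mem_Ioo hb ha
  rw [discriminatorTerm_eq (div_add_mem_Ioo ha hb) hb', one_sub_div_add ha hb,
    ← one_sub_div_add ha hb, sub_sub_cancel, one_sub_div_add ha hb, add_comm b a]

variable (ha : 0 < a) (hb : 0 < b) (hx : x ∈ Set.Ioo 0 1) (hy : y ∈ Set.Ioo 0 1)
include ha hb hx hy

lemma discriminatorTerm_le :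
    discriminatorTerm a b x y ≤ discriminatorTerm a b (a / (a + b)) (b / (a + b)) := by
  rw [discriminatorTerm_eq hx hy, discriminatorTerm_div_add ha hb]
  gcongr ?_ + ?_
  · exact mul_log_add_mul_log_le_of_add_eq_one ha hb hx.1 (by linarith [hx.2]) (by ring)
  · exact mul_log_add_mul_log_le_of_add_eq_one hb ha hy.1 (by linarith [hy.2]) (by ring)

lemma discriminatorTerm_eq_iff :
    discriminatorTerm a b x y = discriminatorTerm a b (a / (a + b)) (b / (a + b))
      ↔ x = a / (a + b) ∧ y = b / (a + b) := by
  have hx' : 0 < 1 - x := by linarith [hx.2]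
  have hy' : 0 < 1 - y := by linarith [hy.2]
  rw [discriminatorTerm_eq hx hy, discriminatorTerm_div_add ha hb,
    add_eq_add_iff_eq_and_eq (mul_log_add_mul_log_le_of_add_eq_one ha hb hx.1 hx' (by ring))
      (mul_log_add_mul_log_le_of_add_eq_one hb ha hy.1 hy' (by ring)),
    mul_log_add_mul_log_eq_iff_of_add_eq_one ha hb hx.1 hx' (by ring),
    mul_log_add_mul_log_eq_iff_of_add_eq_one hb ha hy.1 hy' (by ring), add_comm b a]

end discriminatorTerm

theorem stmt_12_general {I : Type*} [Fintype I]
    (ρUN ρMIX : I → ℝ) (hUN : ∀ i, ρUN i > 0) (hMIX : ∀ i, ρMIX i > 0)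
    (g : (I → ℝ) × (I → ℝ) → ℝ)
    (hg : ∀ μ : (I → ℝ) × (I → ℝ),
      g μ = (∑ i, ρMIX i * Real.log (μ.2 i * (1 - μ.1 i)))
          + (∑ i, ρUN i * Real.log (μ.1 i * (1 - μ.2 i))))
    (D : Set ((I → ℝ) × (I → ℝ)))
    (hD : D = {μ : (I → ℝ) × (I → ℝ) |
      ∀ i, (0 < μ.1 i ∧ μ.1 i < 1) ∧ (0 < μ.2 i ∧ μ.2 i < 1)})
    (μ1s μ2s : I → ℝ)
    (hμ1 : ∀ i, μ1s i = ρUN i / (ρUN i + ρMIX i))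
    (hμ2 : ∀ i, μ2s i = ρMIX i / (ρUN i + ρMIX i)) :
    (μ1s, μ2s) ∈ D ∧
    (∀ μ ∈ D, g μ ≤ g (μ1s, μ2s)) ∧
    (∀ μ ∈ D, g μ = g (μ1s, μ2s) → μ = (μ1s, μ2s)) ∧
    (∀ i, μ1s i / μ2s i = ρUN i / ρMIX i) := by
  subst hD
  obtain rfl : μ1s = fun i => ρUN i / (ρUN i + ρMIX i) := funext hμ1
  obtain rfl : μ2s = fun i => ρMIX i / (ρUN i + ρMIX i) := funext hμ2
  have hsum : ∀ μ : (I → ℝ) × (I → ℝ),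
      g μ = ∑ i, discriminatorTerm (ρUN i) (ρMIX i) (μ.1 i) (μ.2 i) := fun μ => by
    rw [hg, ← sum_add_distrib]
    rfl
  refine ⟨fun i => ⟨div_add_mem_Ioo (hUN i) (hMIX i), ?_⟩, fun μ hμ => ?_,
    fun μ hμ heq => ?_, fun i => ?_⟩
  · show ρMIX i / (ρUN i + ρMIX i) ∈ Set.Ioo 0 1
    rw [add_comm]
    exact div_add_mem_Ioo (hMIX i) (hUN i)
  · rw [hsum, hsum]
    exact sum_le_sum fun i _ => discriminatorTerm_le (hUN i) (hMIX i) (hμ i).1 (hμ i).2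
  · rw [hsum, hsum, sum_eq_sum_iff_of_le
      fun i _ => discriminatorTerm_le (hUN i) (hMIX i) (hμ i).1 (hμ i).2] at heq
    have hcoord i := (discriminatorTerm_eq_iff (hUN i) (hMIX i) (hμ i).1 (hμ i).2).1
      (heq i (mem_univ i))
    exact Prod.ext (funext fun i => (hcoord i).1) (funext fun i => (hcoord i).2)
  · exact div_div_div_cancel_right₀ (add_pos (hUN i) (hMIX i)).ne' _ _

/-- Proposition 3: the discriminator objective `g` has the unique maximizer
`(μ1*, μ2*)` over pairs of functions with values in `(0, 1)`, and the ratio of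
the optimal solutions recovers the occupancy ratio `ρUN / ρMIX`. -/
theorem stmt_12 {I : Type*} [Fintype I] [Nonempty I]
    (ρUN ρMIX : I → ℝ) (hUN : ∀ i, ρUN i > 0) (hMIX : ∀ i, ρMIX i > 0)
    (g : (I → ℝ) × (I → ℝ) → ℝ)
    (hg : ∀ μ : (I → ℝ) × (I → ℝ),
      g μ = (∑ i, ρMIX i * Real.log (μ.2 i * (1 - μ.1 i)))
          + (∑ i, ρUN i * Real.log (μ.1 i * (1 - μ.2 i))))
    (D : Set ((I → ℝ) × (I → ℝ)))
    (hD : D = {μ : (I → ℝ) × (I → ℝ) |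
      ∀ i, (0 < μ.1 i ∧ μ.1 i < 1) ∧ (0 < μ.2 i ∧ μ.2 i < 1)})
    (μ1s μ2s : I → ℝ)
    (hμ1 : ∀ i, μ1s i = ρUN i / (ρUN i + ρMIX i))
    (hμ2 : ∀ i, μ2s i = ρMIX i / (ρUN i + ρMIX i)) :
    (μ1s, μ2s) ∈ D ∧
    (∀ μ ∈ D, g μ ≤ g (μ1s, μ2s)) ∧
    (∀ μ ∈ D, g μ = g (μ1s, μ2s) → μ = (μ1s, μ2s)) ∧
    (∀ i, μ1s i / μ2s i = ρUN i / ρMIX i) :=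
  stmt_12_general ρUN ρMIX hUN hMIX g hg D hD μ1s μ2s hμ1 hμ2
end

section
/- Let S and A be finite nonempty types and Q : S → A → ℝ. Define VQ : S → ℝ by VQ s = log (∑ a, exp (Q s a)), weights w : S → A → ℝ by w s a = exp (Q s a − VQ s), and the softmax policy πQ by πQ s a = exp (Q s a) / ∑ a', exp (Q s a'). Then for every π : S → A → ℝ with π s a > 0 for all s, a and ∑ a, π s a = 1 for every s, we have ∑ s, ∑ a, w s a * log (π s a) ≤ ∑ s, ∑ a, w s a * log (πQ s a), and equality holds if and only if π = πQ; i.e., πQ is the unique maximizer of the weighted behavior cloning objective with weights exp(Q(s,a) − VQ(s)). -/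
open Finset

lemma gibbs_aux {A : Type*} [Fintype A] (p q : A → ℝ)
    (hp : ∀ a, 0 < p a) (hq : ∀ a, 0 < q a)
    (hp1 : ∑ a, p a = 1) (hq1 : ∑ a, q a = 1) :
    (∑ a, q a * Real.log (p a)) ≤ (∑ a, q a * Real.log (q a)) ∧
    ((∑ a, q a * Real.log (p a)) = (∑ a, q a * Real.log (q a)) ↔ p = q) := by
  have key : ∀ a, q a * Real.log (p a) - q a * Real.log (q a) ≤ p a - q a := by
    intro a
    have h1 : Real.log (p a) - Real.log (q a) = Real.log (p a / q a) :=
      (Real.log_div (hp a).ne' (hq a).ne').symm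
    have h2 : Real.log (p a / q a) ≤ p a / q a - 1 :=
      Real.log_le_sub_one_of_pos (div_pos (hp a) (hq a))
    calc q a * Real.log (p a) - q a * Real.log (q a)
        = q a * Real.log (p a / q a) := by rw [← mul_sub, h1]
      _ ≤ q a * (p a / q a - 1) := mul_le_mul_of_nonneg_left h2 (hq a).le
      _ = p a - q a := by rw [mul_sub, mul_one, mul_div_cancel₀ _ (hq a).ne']
  have keys : ∀ a, p a ≠ q a →
      q a * Real.log (p a) - q a * Real.log (q a) < p a - q a := by
    intro a hne
    have h1 : Real.log (p a) - Real.log (q a) = Real.log (p a / q a) :=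
      (Real.log_div (hp a).ne' (hq a).ne').symm
    have hne' : p a / q a ≠ 1 := fun h => hne ((div_eq_one_iff_eq (hq a).ne').mp h)
    have h2 : Real.log (p a / q a) < p a / q a - 1 :=
      Real.log_lt_sub_one_of_pos (div_pos (hp a) (hq a)) hne'
    calc q a * Real.log (p a) - q a * Real.log (q a)
        = q a * Real.log (p a / q a) := by rw [← mul_sub, h1]
      _ < q a * (p a / q a - 1) := by exact mul_lt_mul_of_pos_left h2 (hq a)
      _ = p a - q a := by rw [mul_sub, mul_one, mul_div_cancel₀ _ (hq a).ne']
  have hsum0 : ∑ a, (p a - q a) = 0 := by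
    rw [Finset.sum_sub_distrib, hp1, hq1]; ring
  have hle : (∑ a, q a * Real.log (p a)) ≤ (∑ a, q a * Real.log (q a)) := by
    have h := Finset.sum_le_sum (s := Finset.univ) (fun a _ => key a)
    rw [hsum0, Finset.sum_sub_distrib] at h
    linarith
  refine ⟨hle, ⟨fun heq => ?_, fun heq => by rw [heq]⟩⟩
  by_contra hne
  obtain ⟨a, ha⟩ : ∃ a, p a ≠ q a := by
    by_contra h; push_neg at h; exact hne (funext h)
  have hlt : (∑ a, (q a * Real.log (p a) - q a * Real.log (q a))) < ∑ a, (p a - q a) :=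
    Finset.sum_lt_sum (fun a _ => key a) ⟨a, Finset.mem_univ a, keys a ha⟩
  rw [hsum0, Finset.sum_sub_distrib] at hlt
  linarith

/-- Policy extraction via weighted behavior cloning: with weights
`w s a = exp (Q s a - VQ s)` and `VQ s = log ∑ exp Q(s,·)`, the softmax policy
`πQ` is the unique maximizer of the WBC objective over strictly positive
policies. -/
theorem stmt_14 {S A : Type*} [Fintype S] [Fintype A] [Nonempty S] [Nonempty A]
    (Q : S → A → ℝ)
    (VQ : S → ℝ) (hVQ : ∀ s, VQ s = Real.log (∑ a, Real.exp (Q s a)))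
    (w : S → A → ℝ) (hw : ∀ s a, w s a = Real.exp (Q s a - VQ s))
    (πQ : S → A → ℝ)
    (hπQ : ∀ s a, πQ s a = Real.exp (Q s a) / ∑ a', Real.exp (Q s a')) :
    ∀ π : S → A → ℝ, (∀ s a, 0 < π s a) → (∀ s, ∑ a, π s a = 1) →
      (∑ s, ∑ a, w s a * Real.log (π s a))
          ≤ (∑ s, ∑ a, w s a * Real.log (πQ s a)) ∧
      ((∑ s, ∑ a, w s a * Real.log (π s a))
          = (∑ s, ∑ a, w s a * Real.log (πQ s a)) ↔ π = πQ) := by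
  intro π hπpos hπ1
  have hZpos : ∀ s, 0 < ∑ a, Real.exp (Q s a) :=
    fun s => Finset.sum_pos (fun a _ => Real.exp_pos _) Finset.univ_nonempty
  have hwq : ∀ s a, w s a = πQ s a := by
    intro s a
    rw [hw, hπQ, hVQ, Real.exp_sub, Real.exp_log (hZpos s)]
  have hqpos : ∀ s a, 0 < πQ s a := by
    intro s a; rw [hπQ]; exact div_pos (Real.exp_pos _) (hZpos s)
  have hq1 : ∀ s, ∑ a, πQ s a = 1 := by
    intro s
    simp only [hπQ]
    rw [← Finset.sum_div, div_self (hZpos s).ne']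
  have main : ∀ s, (∑ a, w s a * Real.log (π s a)) ≤ (∑ a, w s a * Real.log (πQ s a)) ∧
      ((∑ a, w s a * Real.log (π s a)) = (∑ a, w s a * Real.log (πQ s a)) ↔ π s = πQ s) := by
    intro s
    simp only [hwq]
    exact gibbs_aux (π s) (πQ s) (hπpos s) (hqpos s) (hπ1 s) (hq1 s)
  refine ⟨Finset.sum_le_sum (fun s _ => (main s).1), ⟨fun heq => ?_, fun heq => by rw [heq]⟩⟩
  · funext s
    by_contra hne
    have hlt : (∑ a, w s a * Real.log (π s a)) < (∑ a, w s a * Real.log (πQ s a)) :=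
      lt_of_le_of_ne (main s).1 (fun h => hne ((main s).2.mp h))
    have : (∑ s, ∑ a, w s a * Real.log (π s a)) < (∑ s, ∑ a, w s a * Real.log (πQ s a)) :=
      Finset.sum_lt_sum (fun s _ => (main s).1) ⟨s, Finset.mem_univ s, hlt⟩
    linarith
end

section
/- Let S and A be finite nonempty types, let γ ∈ ℝ with 0 ≤ γ < 1, let P : S → A → S → ℝ be a transition kernel, let π : S → A → ℝ be a policy, and let r : S → A → ℝ. Define B : (S → A → ℝ) → (S → A → ℝ) by B Q s a = r s a + γ * ∑ s', P s a s' * (∑ a', (π s' a' * Q s' a' + negMulLog (π s' a'))). Then there exists a unique Q : S → A → ℝ with B Q = Q (∃! Q, B Q = Q). -/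
/-- For any reward `r` there is a unique fixed point of the soft Bellman
operator: `∃! Q, B Q = Q`. -/
theorem stmt_16 {S A : Type*} [Fintype S] [Fintype A] [Nonempty S] [Nonempty A]
    (γ : ℝ) (hγ0 : 0 ≤ γ) (hγ1 : γ < 1)
    (P : S → A → S → ℝ)
    (hP0 : ∀ s a s', 0 ≤ P s a s') (hP1 : ∀ s a, ∑ s', P s a s' = 1)
    (π : S → A → ℝ) (hπ : ∀ s, π s ∈ stdSimplex ℝ A)
    (r : S → A → ℝ)
    (B : (S → A → ℝ) → (S → A → ℝ))
    (hB : ∀ Q s a, B Q s a = r s a + γ * ∑ s', P s a s' *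
      (∑ a', (π s' a' * Q s' a' + Real.negMulLog (π s' a')))) :
    ∃! Q : S → A → ℝ, B Q = Q := by
  have hlip : LipschitzWith ⟨γ, hγ0⟩ B := by
    apply LipschitzWith.of_dist_le_mul
    intro Q Q'
    show dist (B Q) (B Q') ≤ γ * dist Q Q'
    have hd0 : (0 : ℝ) ≤ γ * dist Q Q' := mul_nonneg hγ0 dist_nonneg
    rw [dist_pi_le_iff hd0]
    intro s
    rw [dist_pi_le_iff hd0]
    intro a
    rw [Real.dist_eq, hB, hB]
    have key : |(∑ s', P s a s' * (∑ a', (π s' a' * Q s' a' + Real.negMulLog (π s' a')))) -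
        (∑ s', P s a s' * (∑ a', (π s' a' * Q' s' a' + Real.negMulLog (π s' a'))))| ≤
        dist Q Q' := by
      rw [← Finset.sum_sub_distrib]
      calc |∑ s', (P s a s' * (∑ a', (π s' a' * Q s' a' + Real.negMulLog (π s' a'))) -
              P s a s' * (∑ a', (π s' a' * Q' s' a' + Real.negMulLog (π s' a'))))|
          ≤ ∑ s', |P s a s' * (∑ a', (π s' a' * Q s' a' + Real.negMulLog (π s' a'))) -
              P s a s' * (∑ a', (π s' a' * Q' s' a' + Real.negMulLog (π s' a')))| :=
            Finset.abs_sum_le_sum_abs _ _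
        _ ≤ ∑ s', P s a s' * dist Q Q' := by
            apply Finset.sum_le_sum
            intro s' _
            rw [← mul_sub, abs_mul, abs_of_nonneg (hP0 s a s')]
            apply mul_le_mul_of_nonneg_left _ (hP0 s a s')
            rw [← Finset.sum_sub_distrib]
            have hsum : ∑ a', ((π s' a' * Q s' a' + Real.negMulLog (π s' a')) -
                (π s' a' * Q' s' a' + Real.negMulLog (π s' a'))) =
                ∑ a', π s' a' * (Q s' a' - Q' s' a') := by
              apply Finset.sum_congr rfl; intro a' _; ring
            rw [hsum]
            calc |∑ a', π s' a' * (Q s' a' - Q' s' a')|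
                ≤ ∑ a', |π s' a' * (Q s' a' - Q' s' a')| := Finset.abs_sum_le_sum_abs _ _
              _ ≤ ∑ a', π s' a' * dist Q Q' := by
                  apply Finset.sum_le_sum
                  intro a' _
                  rw [abs_mul, abs_of_nonneg ((hπ s').1 a')]
                  apply mul_le_mul_of_nonneg_left _ ((hπ s').1 a')
                  calc |Q s' a' - Q' s' a'| = dist (Q s' a') (Q' s' a') := (Real.dist_eq _ _).symm
                    _ ≤ dist (Q s') (Q' s') := dist_le_pi_dist _ _ _
                    _ ≤ dist Q Q' := dist_le_pi_dist _ _ _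
              _ = dist Q Q' := by rw [← Finset.sum_mul, (hπ s').2, one_mul]
        _ = dist Q Q' := by rw [← Finset.sum_mul, hP1, one_mul]
    calc |(r s a + γ * ∑ s', P s a s' * (∑ a', (π s' a' * Q s' a' + Real.negMulLog (π s' a')))) -
          (r s a + γ * ∑ s', P s a s' * (∑ a', (π s' a' * Q' s' a' + Real.negMulLog (π s' a'))))|
        = γ * |(∑ s', P s a s' * (∑ a', (π s' a' * Q s' a' + Real.negMulLog (π s' a')))) -
            (∑ s', P s a s' * (∑ a', (π s' a' * Q' s' a' + Real.negMulLog (π s' a'))))| := by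
          rw [← abs_of_nonneg hγ0, ← abs_mul]; congr 1; rw [abs_of_nonneg hγ0]; ring
      _ ≤ γ * dist Q Q' := mul_le_mul_of_nonneg_left key hγ0
  have hcontr : ContractingWith ⟨γ, hγ0⟩ B := ⟨by exact_mod_cast hγ1, hlip⟩
  refine ⟨hcontr.fixedPoint B, hcontr.fixedPoint_isFixedPt, fun Q hQ => ?_⟩
  exact hcontr.fixedPoint_unique hQ
end

section
/- Let S and A be finite nonempty types, let γ ∈ ℝ with 0 ≤ γ < 1, let P : S → A → S → ℝ be a transition kernel, and let π : S → A → ℝ be a policy. Define the inverse soft Bellman operator T : (S → A → ℝ) → (S → A → ℝ) by T Q s a = Q s a − γ * ∑ s', P s a s' * (∑ a', (π s' a' * Q s' a' + negMulLog (π s' a'))). Then T is bijective: for every r : S → A → ℝ there exists a unique Q : S → A → ℝ with T Q = r. -/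
/-- The inverse soft Bellman operator `T` is a bijection between Q-functions
and reward functions: every reward `r` arises from a unique `Q` with
`T Q = r`. -/
theorem stmt_17 {S A : Type*} [Fintype S] [Fintype A] [Nonempty S] [Nonempty A]
    (γ : ℝ) (hγ0 : 0 ≤ γ) (hγ1 : γ < 1)
    (P : S → A → S → ℝ)
    (hP0 : ∀ s a s', 0 ≤ P s a s') (hP1 : ∀ s a, ∑ s', P s a s' = 1)
    (π : S → A → ℝ) (hπ : ∀ s, π s ∈ stdSimplex ℝ A)
    (T : (S → A → ℝ) → (S → A → ℝ))
    (hT : ∀ Q s a, T Q s a = Q s a - γ * ∑ s', P s a s' *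
      (∑ a', (π s' a' * Q s' a' + Real.negMulLog (π s' a')))) :
    ∀ r : S → A → ℝ, ∃! Q : S → A → ℝ, T Q = r := by
  intro r
  set F : (S → A → ℝ) → (S → A → ℝ) := fun Q s a =>
    r s a + γ * ∑ s', P s a s' *
      (∑ a', (π s' a' * Q s' a' + Real.negMulLog (π s' a'))) with hF
  have hπ0 : ∀ s a, 0 ≤ π s a := fun s a => (hπ s).1 a
  have hπ1 : ∀ s, ∑ a, π s a = 1 := fun s => (hπ s).2
  -- contraction estimate
  have key : ∀ Q Q' : S → A → ℝ, dist (F Q) (F Q') ≤ γ * dist Q Q' := by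
    intro Q Q'
    have hd : 0 ≤ γ * dist Q Q' := mul_nonneg hγ0 dist_nonneg
    rw [dist_pi_le_iff hd]
    intro s
    rw [dist_pi_le_iff hd]
    intro a
    have hQ : ∀ s' a', |Q s' a' - Q' s' a'| ≤ dist Q Q' := by
      intro s' a'
      calc |Q s' a' - Q' s' a'| = dist (Q s' a') (Q' s' a') := (Real.dist_eq _ _).symm
        _ ≤ dist (Q s') (Q' s') := dist_le_pi_dist _ _ _
        _ ≤ dist Q Q' := dist_le_pi_dist _ _ _
    have heq : F Q s a - F Q' s a
        = γ * ∑ s', P s a s' * ∑ a', π s' a' * (Q s' a' - Q' s' a') := by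
      simp only [hF]
      have h2 : ∀ (x y z : ℝ), x + y - (x + z) = y - z := fun x y z => by ring
      rw [h2, ← mul_sub, ← Finset.sum_sub_distrib]
      congr 1
      apply Finset.sum_congr rfl
      intro s' _
      rw [← mul_sub, ← Finset.sum_sub_distrib]
      congr 1
      apply Finset.sum_congr rfl
      intro a' _
      ring
    rw [Real.dist_eq, heq, abs_mul, abs_of_nonneg hγ0]
    have h1 : |∑ s', P s a s' * ∑ a', π s' a' * (Q s' a' - Q' s' a')| ≤ dist Q Q' := by
      calc |∑ s', P s a s' * ∑ a', π s' a' * (Q s' a' - Q' s' a')|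
          ≤ ∑ s', |P s a s' * ∑ a', π s' a' * (Q s' a' - Q' s' a')| :=
            Finset.abs_sum_le_sum_abs _ _
        _ ≤ ∑ s', P s a s' * dist Q Q' := by
            apply Finset.sum_le_sum
            intro s' _
            rw [abs_mul, abs_of_nonneg (hP0 s a s')]
            apply mul_le_mul_of_nonneg_left _ (hP0 s a s')
            calc |∑ a', π s' a' * (Q s' a' - Q' s' a')|
                ≤ ∑ a', |π s' a' * (Q s' a' - Q' s' a')| := Finset.abs_sum_le_sum_abs _ _
              _ ≤ ∑ a', π s' a' * dist Q Q' := by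
                  apply Finset.sum_le_sum
                  intro a' _
                  rw [abs_mul, abs_of_nonneg (hπ0 s' a')]
                  exact mul_le_mul_of_nonneg_left (hQ s' a') (hπ0 s' a')
              _ = dist Q Q' := by rw [← Finset.sum_mul, hπ1, one_mul]
        _ = dist Q Q' := by rw [← Finset.sum_mul, hP1, one_mul]
    exact mul_le_mul_of_nonneg_left h1 hγ0
  have hlip : LipschitzWith ⟨γ, hγ0⟩ F := LipschitzWith.of_dist_le_mul key
  have hC : ContractingWith ⟨γ, hγ0⟩ F := ⟨by exact_mod_cast hγ1, hlip⟩
  -- T Q = r ↔ F Q = Q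
  have hiff : ∀ Q, T Q = r ↔ F Q = Q := by
    intro Q
    constructor
    · intro h
      funext s a
      have := congrFun (congrFun h s) a
      rw [hT] at this
      simp only [hF]
      linarith
    · intro h
      funext s a
      have := congrFun (congrFun h s) a
      simp only [hF] at this
      rw [hT]
      linarith
  refine ⟨hC.fixedPoint F, (hiff _).2 hC.fixedPoint_isFixedPt, ?_⟩
  intro Q hQ
  exact hC.fixedPoint_unique ((hiff Q).1 hQ)
end
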